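/- For a, b ∈ ℂ, the Vir-module A_{a,b} is not simple if and only if a ∈ ℤ and b ∈ {0, 1}. -/

import Mathlib

/-- Index type for the standard basis of the Virasoro algebra. -/
inductive VirIx : Type
  | l : ℤ → VirIx
  | c : VirIx

/-- A complex Lie algebra `𝔤` equipped with the structure of the Virasoro algebra:
a basis `{L_n, C_L}` with the defining Lie brackets. -/
structure VirS (𝔤 : Type*) [LieRing 𝔤] [LieAlgebra ℂ 𝔤] where
  b : Module.Basis VirIx ℂ 𝔤
  bracket_LL : ∀ m n : ℤ, ⁅b (.l m), b (.l n)⁆ =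
    ((n : ℂ) - (m : ℂ)) • b (.l (m + n)) +
      (if m + n = 0 then (((m : ℂ) ^ 3 - (m : ℂ)) / 12) • b .c else 0)
  central_C : ∀ x : 𝔤, ⁅x, b .c⁆ = 0

namespace VirS

variable {𝔤 : Type*} [LieRing 𝔤] [LieAlgebra ℂ 𝔤]

/-- The element `L n`. -/
noncomputable def L (s : VirS 𝔤) (n : ℤ) : 𝔤 := s.b (.l n)
/-- The central element `C_L`. -/
noncomputable def C (s : VirS 𝔤) : 𝔤 := s.b .c

end VirS

/-- `θ` is a conjugate-linear anti-involution of the complex Lie algebra `𝔤`. -/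
structure IsConjAntiInvol (𝔤 : Type*) [LieRing 𝔤] [LieAlgebra ℂ 𝔤] (θ : 𝔤 → 𝔤) : Prop where
  map_add : ∀ x y : 𝔤, θ (x + y) = θ x + θ y
  map_smul : ∀ (c : ℂ) (x : 𝔤), θ (c • x) = (starRingEnd ℂ) c • θ x
  map_bracket : ∀ x y : 𝔤, θ ⁅x, y⁆ = ⁅θ y, θ x⁆
  invol : ∀ x : 𝔤, θ (θ x) = x

/-- A `𝔤`-module `V` is unitary with respect to `θ` if there is a positive definite
Hermitian form `⟨·,·⟩` (linear in the first argument) with `⟨x·u, v⟩ = ⟨u, θ(x)·v⟩`. -/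
def IsUnitaryWith (𝔤 : Type*) [LieRing 𝔤] [LieAlgebra ℂ 𝔤]
    (V : Type*) [AddCommGroup V] [Module ℂ V] [LieRingModule 𝔤 V]
    (θ : 𝔤 → 𝔤) : Prop :=
  ∃ B : V → V → ℂ,
    (∀ u v w : V, B (u + v) w = B u w + B v w) ∧
    (∀ (c : ℂ) (u v : V), B (c • u) v = c * B u v) ∧
    (∀ u v : V, B v u = (starRingEnd ℂ) (B u v)) ∧
    (∀ v : V, v ≠ 0 → 0 < (B v v).re) ∧
    (∀ (x : 𝔤) (u v : V), B ⁅x, u⁆ v = B u ⁅θ x, v⁆)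

namespace VirS

variable {𝔤 : Type*} [LieRing 𝔤] [LieAlgebra ℂ 𝔤]

/-- Images of the basis vectors under `θ⁺_α`. -/
noncomputable def thetaPlusB (s : VirS 𝔤) (α : ℝ) : VirIx → 𝔤
  | .l n => ((α : ℂ) ^ n) • s.L (-n)
  | .c => s.C

/-- The map `θ⁺_α`, defined on basis elements by `θ⁺_α(L n) = αⁿ L₋ₙ`, `θ⁺_α(C_L) = C_L`,
and extended conjugate-linearly. -/
noncomputable def thetaPlus (s : VirS 𝔤) (α : ℝ) : 𝔤 → 𝔤 :=
  fun x => (s.b.repr x).sum fun ix c => (starRingEnd ℂ) c • s.thetaPlusB α ix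

/-- `V` is a weight module over the Virasoro algebra: `C_L` acts by a scalar and `V` is the
direct sum of finite-dimensional eigenspaces of `L 0`. -/
def IsWeightModule (s : VirS 𝔤) (V : Type*) [AddCommGroup V] [Module ℂ V]
    [LieRingModule 𝔤 V] [LieModule ℂ 𝔤 V] : Prop :=
  (∃ z : ℂ, ∀ v : V, ⁅s.C, v⁆ = z • v) ∧
  (∀ μ : ℂ, FiniteDimensional ℂ
    (Module.End.eigenspace (LieModule.toEnd ℂ 𝔤 V (s.L 0)) μ)) ∧
  (⨆ μ : ℂ, Module.End.eigenspace (LieModule.toEnd ℂ 𝔤 V (s.L 0)) μ) = ⊤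

end VirS

/-!
Every `L n` moves `v k` to a multiple of `v (n + k)`, and `L 0` acts diagonally with the pairwise
distinct eigenvalues `a + k`, so a nonzero submodule contains some `v k` (peel off the components of
a vector with `L 0 - (a + j)`) and is then carried to `v (m + k)` by `L m` unless
`a + k + m b = 0`. Passing through an intermediate `v (m + k)` avoids these zeros for every target
unless `a ∈ ℤ` and `b ∈ {0, 1}`. In those cases `ℂ v₋ₐ` (for `b = 0`), respectively the span of
the `v k` with `k ≠ -a` (for `b = 1`), is stable under all `L n`, and a subspace stable under all
`L n` is a submodule because `C_L = 2 [L₂, L₋₂] + 8 L₀`.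
-/

open Module Submodule

theorem Module.Basis.mem_of_mem_support_of_apply_eq_smul {K V ι : Type*} [Field K]
    [AddCommGroup V] [Module K V] (v : Basis ι K V) {f : V →ₗ[K] V} {μ : ι → K}
    (hμ : Function.Injective μ) (hf : ∀ i, f (v i) = μ i • v i) {p : Submodule K V}
    (hp : ∀ x ∈ p, f x ∈ p) {x : V} (hx : x ∈ p) {i : ι} (hi : i ∈ (v.repr x).support) :
    v i ∈ p := by
  classical
  have repr_f : ∀ y k, v.repr (f y) k = μ k * v.repr y k := by
    intro y k
    have : (v.coord k).comp f = μ k • v.coord k := v.ext fun j => by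
      by_cases hjk : j = k <;> simp [hf, hjk]
    simpa using LinearMap.congr_fun this y
  induction h : (v.repr x).support.card using Nat.strong_induction_on generalizing x with
  | _ n ih =>
    by_cases hj : ∃ j ∈ (v.repr x).support, j ≠ i
    · obtain ⟨j, hj, hji⟩ := hj
      have repr_y : ∀ k, v.repr (f x - μ j • x) k = (μ k - μ j) * v.repr x k := by
        intro k
        simp [repr_f, sub_mul]
      have hsupp : (v.repr (f x - μ j • x)).support = (v.repr x).support.erase j := by
        ext k
        simp only [Finsupp.mem_support_iff, Finset.mem_erase, repr_y, ne_eq, mul_eq_zero,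
          sub_eq_zero, hμ.eq_iff, not_or]
      refine ih _ ?_ (p.sub_mem (hp x hx) (p.smul_mem (μ j) hx)) ?_ rfl
      · rw [hsupp, ← h]
        exact Finset.card_erase_lt_of_mem hj
      · rw [hsupp]
        exact Finset.mem_erase.mpr ⟨hji.symm, hi⟩
    · push Not at hj
      have hxi : x = v.repr x i • v i := v.ext_elem fun k => by
        by_cases hki : k = i
        · simp [hki]
        · have : v.repr x k = 0 := by
            by_contra hk
            exact hki (hj k (Finsupp.mem_support_iff.mpr hk))
          simp [Ne.symm hki, this]
      have hc : v.repr x i ≠ 0 := Finsupp.mem_support_iff.mp hi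
      rw [hxi] at hx
      exact (p.smul_mem_iff hc).mp hx

theorem exists_int_add_mul_ne_zero_and_add_mul_ne_zero {K : Type*} [Field K] [CharZero K]
    {p c q d : K} (hpc : p ≠ 0 ∨ c ≠ 0) (hqd : q ≠ 0 ∨ d ≠ 0) :
    ∃ m : ℤ, p + m * c ≠ 0 ∧ q + m * d ≠ 0 := by
  have zeros_subsingleton : ∀ {p c : K}, (p ≠ 0 ∨ c ≠ 0) →
      {m : ℤ | p + m * c = 0}.Subsingleton := by
    intro p c hpc m (hm : p + m * c = 0) m' (hm' : p + m' * c = 0)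
    have hc : c ≠ 0 := by
      rintro rfl
      simp_all
    have : ((m : K) - m') * c = 0 := by linear_combination hm - hm'
    exact_mod_cast sub_eq_zero.mp ((mul_eq_zero.mp this).resolve_right hc)
  obtain ⟨m, hm⟩ :=
    ((zeros_subsingleton hpc).finite.union (zeros_subsingleton hqd).finite).exists_notMem
  exact ⟨m, by simpa [not_or] using hm⟩

namespace VirS

variable {𝔤 : Type*} [LieRing 𝔤] [LieAlgebra ℂ 𝔤] (s : VirS 𝔤)

theorem C_eq : s.C = (2 : ℂ) • ⁅s.L 2, s.L (-2)⁆ + (8 : ℂ) • s.L 0 := by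
  have h := s.bracket_LL 2 (-2)
  norm_num at h
  unfold L C
  rw [h]
  module

variable {V : Type*} [AddCommGroup V] [Module ℂ V] [LieRingModule 𝔤 V]

/-- `v` is a basis on which `L n` acts as on `A_{a,b}`. -/
def IsIntermediateSeriesBasis (a b : ℂ) (v : Basis ℤ ℂ V) : Prop :=
  ∀ n k : ℤ, ⁅s.L n, v k⁆ = (a + (k : ℂ) + (n : ℂ) * b) • v (n + k)

variable {s} {a b : ℂ} {v : Basis ℤ ℂ V}

theorem IsIntermediateSeriesBasis.mem_of_mem {N : LieSubmodule ℂ 𝔤 V}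
    (hv : s.IsIntermediateSeriesBasis a b v) {k m : ℤ} (hk : v k ∈ N)
    (hne : a + k + m * b ≠ 0) : v (m + k) ∈ N := by
  have := N.smul_mem (a + k + m * b)⁻¹ (N.lie_mem (x := s.L m) hk)
  rwa [hv, smul_smul, inv_mul_cancel₀ hne, one_smul] at this

theorem IsIntermediateSeriesBasis.mem_of_mem_of_not_exceptional {N : LieSubmodule ℂ 𝔤 V}
    (hv : s.IsIntermediateSeriesBasis a b v) (hab : ¬ ((∃ n : ℤ, a = n) ∧ (b = 0 ∨ b = 1)))
    {k : ℤ} (hk : v k ∈ N) (j : ℤ) : v j ∈ N := by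
  obtain ⟨m, hm, hm'⟩ := exists_int_add_mul_ne_zero_and_add_mul_ne_zero
    (p := a + k) (c := b) (q := a + j * b + k * (1 - b)) (d := 1 - b)
    (by
      by_contra! h
      exact hab ⟨⟨-k, by push_cast; linear_combination h.1⟩, Or.inl h.2⟩)
    (by
      by_contra! h
      have hb : b = 1 := by linear_combination -h.2
      exact hab ⟨⟨-j, by push_cast; linear_combination h.1 + (j - k) * h.2⟩, Or.inr hb⟩)
  have hmk := hv.mem_of_mem hk hm
  have := hv.mem_of_mem (m := j - (m + k)) hmk (by push_cast; convert hm' using 1; ring)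
  rwa [sub_add_cancel] at this

variable [LieModule ℂ 𝔤 V]

theorem lie_mem_of_forall_lie_L_mem {p : Submodule ℂ V} (hp : ∀ n, ∀ x ∈ p, ⁅s.L n, x⁆ ∈ p)
    (g : 𝔤) {x : V} (hx : x ∈ p) : ⁅g, x⁆ ∈ p := by
  induction s.b.mem_span g using Submodule.span_induction generalizing x with
  | mem _ hg =>
    obtain ⟨_ | _, rfl⟩ := hg
    · exact hp _ x hx
    · rw [← C, C_eq, add_lie, smul_lie, smul_lie, lie_lie]
      exact p.add_mem (p.smul_mem _ (p.sub_mem (hp _ _ (hp _ _ hx)) (hp _ _ (hp _ _ hx))))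
        (p.smul_mem _ (hp _ _ hx))
  | zero => simp
  | add _ _ _ _ hg hg' => simpa only [add_lie] using p.add_mem (hg hx) (hg' hx)
  | smul _ _ _ hg => simpa only [smul_lie] using p.smul_mem _ (hg hx)

theorem not_isIrreducible_of_span_image {ι : Type*} (v : Basis ι ℂ V) {S : Set ι}
    (hS : S.Nonempty) {t : ι} (ht : t ∉ S)
    (hstab : ∀ n, ∀ k ∈ S, ⁅s.L n, v k⁆ ∈ span ℂ (v '' S)) :
    ¬ LieModule.IsIrreducible ℂ 𝔤 V := by
  intro hirr
  have hp : ∀ n, ∀ x ∈ span ℂ (v '' S), ⁅s.L n, x⁆ ∈ span ℂ (v '' S) := fun n x hx =>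
    (span_le (p := (span ℂ (v '' S)).comap (LieModule.toEnd ℂ 𝔤 V (s.L n)))).mpr
      (by rintro _ ⟨k, hk, rfl⟩; exact hstab n k hk) hx
  let N : LieSubmodule ℂ 𝔤 V :=
    { toSubmodule := span ℂ (v '' S)
      lie_mem := fun hx => lie_mem_of_forall_lie_L_mem hp _ hx }
  obtain ⟨k, hk⟩ := hS
  rcases hirr.eq_bot_or_eq_top N with hN | hN
  · have : v k ∈ N := v.self_mem_span_image.mpr hk
    rw [hN, LieSubmodule.mem_bot] at this
    exact v.ne_zero k this
  · have : v t ∈ N := hN ▸ LieSubmodule.mem_top _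
    exact ht (v.self_mem_span_image.mp this)

theorem IsIntermediateSeriesBasis.not_isIrreducible_of_b_eq_zero {n : ℤ}
    (hv : s.IsIntermediateSeriesBasis n 0 v) : ¬ LieModule.IsIrreducible ℂ 𝔤 V := by
  refine not_isIrreducible_of_span_image (s := s) v (S := {-n}) (Set.singleton_nonempty _)
    (t := -n + 1) (by simp) ?_
  rintro m _ rfl
  simp [hv m]

theorem IsIntermediateSeriesBasis.not_isIrreducible_of_b_eq_one {n : ℤ}
    (hv : s.IsIntermediateSeriesBasis n 1 v) : ¬ LieModule.IsIrreducible ℂ 𝔤 V := by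
  refine not_isIrreducible_of_span_image (s := s) v (S := {-n}ᶜ) ⟨-n + 1, by simp⟩
    (t := -n) (by simp) fun m k _ => ?_
  rw [hv m k]
  by_cases hmk : m + k = -n
  · have hcast : ((m + k : ℤ) : ℂ) = ((-n : ℤ) : ℂ) := congrArg _ hmk
    push_cast at hcast
    rw [show (n : ℂ) + k + m * 1 = 0 by linear_combination hcast, zero_smul]
    exact zero_mem _
  · exact smul_mem _ _ (subset_span ⟨m + k, hmk, rfl⟩)

theorem IsIntermediateSeriesBasis.isIrreducible (hv : s.IsIntermediateSeriesBasis a b v)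
    (hab : ¬ ((∃ n : ℤ, a = n) ∧ (b = 0 ∨ b = 1))) : LieModule.IsIrreducible ℂ 𝔤 V := by
  have : Nontrivial V := ⟨⟨v 0, 0, v.ne_zero 0⟩⟩
  refine LieModule.IsIrreducible.mk fun N hN => ?_
  obtain ⟨x, hx, hx0⟩ := Submodule.exists_mem_ne_zero_of_ne_bot
    (p := N.toSubmodule) (by simpa using hN)
  obtain ⟨k, hk⟩ := Finsupp.support_nonempty_iff.mpr (v.repr.map_ne_zero_iff.mpr hx0)
  have hvk : v k ∈ N := v.mem_of_mem_support_of_apply_eq_smul (f := LieModule.toEnd ℂ 𝔤 V (s.L 0))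
    (μ := fun k => a + k) (fun i j hij => by simpa using hij) (fun i => by simpa using hv 0 i)
    (fun y hy => N.lie_mem hy) hx hk
  rw [← LieSubmodule.toSubmodule_eq_top, eq_top_iff, ← v.span_eq, span_le]
  rintro _ ⟨j, rfl⟩
  exact hv.mem_of_mem_of_not_exceptional hab hvk j

end VirS

theorem Aab_not_simple_iff_general (𝔤 : Type*) [LieRing 𝔤] [LieAlgebra ℂ 𝔤] (s : VirS 𝔤)
    (V : Type*) [AddCommGroup V] [Module ℂ V] [LieRingModule 𝔤 V] [LieModule ℂ 𝔤 V]
    (a b : ℂ) (v : Module.Basis ℤ ℂ V)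
    (hL : ∀ n k : ℤ, ⁅s.L n, v k⁆ = (a + (k : ℂ) + (n : ℂ) * b) • v (n + k)) :
    ¬ LieModule.IsIrreducible ℂ 𝔤 V ↔ ((∃ n : ℤ, a = (n : ℂ)) ∧ (b = 0 ∨ b = 1)) := by
  have hv : s.IsIntermediateSeriesBasis a b v := hL
  constructor
  · intro hred
    by_contra hab
    exact hred (hv.isIrreducible hab)
  · rintro ⟨⟨n, rfl⟩, rfl | rfl⟩
    · exact hv.not_isIrreducible_of_b_eq_zero
    · exact hv.not_isIrreducible_of_b_eq_one

/-- The intermediate series module `A_{a,b}` over the Virasoro algebra is not simple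
if and only if `a ∈ ℤ` and `b ∈ {0, 1}`. -/
theorem Aab_not_simple_iff (𝔤 : Type*) [LieRing 𝔤] [LieAlgebra ℂ 𝔤] (s : VirS 𝔤)
    (V : Type*) [AddCommGroup V] [Module ℂ V] [LieRingModule 𝔤 V] [LieModule ℂ 𝔤 V]
    (a b : ℂ) (v : Module.Basis ℤ ℂ V)
    (hL : ∀ n k : ℤ, ⁅s.L n, v k⁆ = (a + (k : ℂ) + (n : ℂ) * b) • v (n + k))
    (hC : ∀ k : ℤ, ⁅s.C, v k⁆ = 0) :
    ¬ LieModule.IsIrreducible ℂ 𝔤 V ↔ ((∃ n : ℤ, a = (n : ℂ)) ∧ (b = 0 ∨ b = 1)) :=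
  Aab_not_simple_iff_general 𝔤 s V a b v hL
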